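/- For every σ∈(0,1), with τ=√(1-σ²): (1/τ³)·(1 - (2/π)(τ + (1/σ)arctan(σ/τ))) = -(16/π)∫₀¹ (1-t)²(1+t²)t / ((1+t²)²-4t²σ²)² dt. In particular this quantity is negative and decreasing in σ. -/

import Mathlib

/-
With `q_c(t) = 1 - 2ct + t² = (t - c)² + τ²`, the denominator factors as `(q_σ q_{-σ})²` and the
integrand splits as `(1 - t)² (q_σ⁻² - q_{-σ}⁻²) / (8σ)`. Each piece has the elementary primitive
`(1 - c) (arctan((t - c)/τ)/τ + (1 - ct)/q_c) / (8στ²)`. At the endpoints the arctangents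
collapse through `arctan((1 ± σ)/τ) = π/4 ± arctan(σ/τ)/2`, which yields `P σ`. The sign and the
monotonicity follow because the integrand is positive on `(0, 1)` and increasing in `σ²`.
-/

open Real

noncomputable def P (σ : ℝ) : ℝ :=
  (1 / Real.sqrt (1 - σ ^ 2) ^ 3) *
    (1 - (2 / π) * (Real.sqrt (1 - σ ^ 2) +
      (1 / σ) * Real.arctan (σ / Real.sqrt (1 - σ ^ 2))))

open Set intervalIntegral

noncomputable def pIntegrand (σ t : ℝ) : ℝ :=
  (1 - t) ^ 2 * (1 + t ^ 2) * t / ((1 + t ^ 2) ^ 2 - 4 * t ^ 2 * σ ^ 2) ^ 2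

lemma one_sub_two_mul_mul_add_sq_pos {c : ℝ} (hc : c ^ 2 < 1) (t : ℝ) :
    0 < 1 - 2 * c * t + t ^ 2 := by
  nlinarith [sq_nonneg (t - c)]

lemma pIntegrand_denom_eq_mul (σ t : ℝ) :
    (1 + t ^ 2) ^ 2 - 4 * t ^ 2 * σ ^ 2 =
      (1 - 2 * σ * t + t ^ 2) * (1 - 2 * (-σ) * t + t ^ 2) := by
  ring

lemma pIntegrand_denom_pos {σ : ℝ} (hσ : σ ^ 2 < 1) (t : ℝ) :
    0 < (1 + t ^ 2) ^ 2 - 4 * t ^ 2 * σ ^ 2 := by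
  rw [pIntegrand_denom_eq_mul]
  exact mul_pos (one_sub_two_mul_mul_add_sq_pos hσ t)
    (one_sub_two_mul_mul_add_sq_pos (by rwa [neg_sq]) t)

lemma continuous_pIntegrand {σ : ℝ} (hσ : σ ^ 2 < 1) : Continuous (pIntegrand σ) :=
  Continuous.div (by fun_prop) (by fun_prop)
    fun t => pow_ne_zero 2 (pIntegrand_denom_pos hσ t).ne'

lemma pIntegrand_pos {σ t : ℝ} (hσ : σ ^ 2 < 1) (ht : t ∈ Ioo 0 1) : 0 < pIntegrand σ t := by
  have h₁ : 0 < 1 - t := sub_pos.2 ht.2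
  have h₂ := pIntegrand_denom_pos hσ t
  have h₃ := ht.1
  unfold pIntegrand
  positivity

lemma pIntegrand_lt_pIntegrand {σ₁ σ₂ t : ℝ} (hσ₁₂ : σ₁ ^ 2 < σ₂ ^ 2) (hσ₂ : σ₂ ^ 2 < 1)
    (ht : t ∈ Ioo 0 1) : pIntegrand σ₁ t < pIntegrand σ₂ t := by
  have hD₂ := pIntegrand_denom_pos hσ₂ t
  have hD : (1 + t ^ 2) ^ 2 - 4 * t ^ 2 * σ₂ ^ 2 < (1 + t ^ 2) ^ 2 - 4 * t ^ 2 * σ₁ ^ 2 := by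
    nlinarith [pow_pos ht.1 2]
  have h₁ : 0 < 1 - t := sub_pos.2 ht.2
  have h₃ := ht.1
  unfold pIntegrand
  gcongr

noncomputable def arctanTerm (τ c t : ℝ) : ℝ :=
  arctan ((t - c) / τ) / τ + (1 - c * t) / (1 - 2 * c * t + t ^ 2)

lemma hasDerivAt_arctanTerm {τ c : ℝ} (hτ : 0 < τ) (hc : τ ^ 2 = 1 - c ^ 2) (t : ℝ) :
    HasDerivAt (arctanTerm τ c) ((1 + c) * (1 - t) ^ 2 / (1 - 2 * c * t + t ^ 2) ^ 2) t := by
  have hq := one_sub_two_mul_mul_add_sq_pos (c := c) (by nlinarith [pow_pos hτ 2]) t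
  have h₁ : HasDerivAt (fun t => arctan ((t - c) / τ) / τ) (1 / (1 - 2 * c * t + t ^ 2)) t := by
    refine ((((hasDerivAt_id t).sub_const c).div_const τ).arctan.div_const τ).congr_deriv ?_
    have hτq : 1 + ((t - c) / τ) ^ 2 = (1 - 2 * c * t + t ^ 2) / τ ^ 2 := by
      field_simp
      linear_combination hc
    simp only [id, hτq]
    field_simp
  have h₂ : HasDerivAt (fun t => (1 - c * t) / (1 - 2 * c * t + t ^ 2))
      ((c - 2 * t + c * t ^ 2) / (1 - 2 * c * t + t ^ 2) ^ 2) t := by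
    refine (((hasDerivAt_id t).const_mul c).const_sub 1 |>.div
      ((((hasDerivAt_id t).const_mul (2 * c)).const_sub 1).add ((hasDerivAt_id t).pow 2))
        hq.ne').congr_deriv ?_
    simp only [id, Pi.add_apply, Pi.pow_apply]
    ring
  refine (h₁.add h₂).congr_deriv ?_
  field_simp
  ring

noncomputable def pPrimitive (σ τ t : ℝ) : ℝ :=
  ((1 - σ) * arctanTerm τ σ t - (1 + σ) * arctanTerm τ (-σ) t) / (8 * σ * τ ^ 2)

lemma hasDerivAt_pPrimitive {σ τ : ℝ} (hσ : σ ≠ 0) (hτ : 0 < τ) (hστ : τ ^ 2 = 1 - σ ^ 2)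
    (t : ℝ) : HasDerivAt (pPrimitive σ τ) (pIntegrand σ t) t := by
  have hσ₁ : σ ^ 2 < 1 := by nlinarith [pow_pos hτ 2]
  have hq := one_sub_two_mul_mul_add_sq_pos hσ₁ t
  have hq' := one_sub_two_mul_mul_add_sq_pos (c := -σ) (by rwa [neg_sq]) t
  have hστ' : τ ^ 2 = 1 - (-σ) ^ 2 := by rwa [neg_sq]
  refine ((((hasDerivAt_arctanTerm hτ hστ t).const_mul (1 - σ)).sub
    ((hasDerivAt_arctanTerm hτ hστ' t).const_mul (1 + σ))).div_const
      (8 * σ * τ ^ 2)).congr_deriv ?_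
  rw [pIntegrand, pIntegrand_denom_eq_mul, hστ]
  have hσ₁' : 1 - σ ^ 2 ≠ 0 := by linarith
  generalize hA : 1 - 2 * σ * t + t ^ 2 = A at hq ⊢
  generalize hB : 1 - 2 * -σ * t + t ^ 2 = B at hq' ⊢
  field_simp
  subst hA hB
  ring

lemma arctan_one_add_div {σ τ : ℝ} (hσ : σ < 1) (hτ : 0 < τ) (hστ : τ ^ 2 = 1 - σ ^ 2) :
    arctan ((1 + σ) / τ) = π / 2 - arctan ((1 - σ) / τ) := by
  have hinv : ((1 - σ) / τ)⁻¹ = (1 + σ) / τ := by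
    rw [inv_div, div_eq_div_iff (by linarith) hτ.ne']
    linear_combination hστ
  rw [← hinv, arctan_inv_of_pos (div_pos (by linarith) hτ)]

lemma two_mul_arctan_one_sub_div {σ τ : ℝ} (hσ : 0 < σ) (hτ : 0 < τ) (hστ : τ ^ 2 = 1 - σ ^ 2) :
    2 * arctan ((1 - σ) / τ) = π / 2 - arctan (σ / τ) := by
  have hσ₁ : σ < 1 := by nlinarith [pow_pos hτ 2]
  have hx : ((1 - σ) / τ) ^ 2 < 1 := by
    rw [div_pow, div_lt_one (by positivity)]
    nlinarith
  have hx' : 2 * ((1 - σ) / τ) / (1 - ((1 - σ) / τ) ^ 2) = (σ / τ)⁻¹ := by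
    have h : 1 - ((1 - σ) / τ) ^ 2 = 2 * σ * (1 - σ) / τ ^ 2 := by
      field_simp
      linear_combination hστ
    have : 1 - σ ≠ 0 := by linarith
    rw [h]
    field_simp
  rw [two_mul_arctan (by nlinarith [sq_nonneg ((1 - σ) / τ)]) (by nlinarith), hx',
    arctan_inv_of_pos (div_pos hσ hτ)]

lemma arctanTerm_one {τ c : ℝ} (hc : c ≠ 1) :
    arctanTerm τ c 1 = arctan ((1 - c) / τ) / τ + 1 / 2 := by
  have : (1 : ℝ) - 2 * c * 1 + 1 ^ 2 ≠ 0 := fun h => hc (by linarith)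
  rw [arctanTerm, add_right_inj, div_eq_div_iff this two_ne_zero]
  ring

lemma arctanTerm_zero (τ c : ℝ) : arctanTerm τ c 0 = -arctan (c / τ) / τ + 1 := by
  simp [arctanTerm, neg_div, arctan_neg]

lemma pPrimitive_one_sub_pPrimitive_zero {σ τ : ℝ} (hσ : 0 < σ) (hτ : 0 < τ)
    (hστ : τ ^ 2 = 1 - σ ^ 2) :
    pPrimitive σ τ 1 - pPrimitive σ τ 0 = (τ + arctan (σ / τ) / σ - π / 2) / (8 * τ ^ 3) := by
  have hσ₁ : σ < 1 := by nlinarith [pow_pos hτ 2]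
  have h₂ := two_mul_arctan_one_sub_div hσ hτ hστ
  simp only [pPrimitive, arctanTerm_one hσ₁.ne, arctanTerm_one (c := -σ) (by linarith),
    arctanTerm_zero, sub_neg_eq_add, neg_div, arctan_neg, arctan_one_add_div hσ₁ hτ hστ]
  field_simp
  linear_combination 2 * h₂

lemma P_eq_integral_pIntegrand {σ : ℝ} (hσ : σ ∈ Ioo 0 1) :
    P σ = -(16 / π) * ∫ t in (0 : ℝ)..1, pIntegrand σ t := by
  have hσ₂ : σ ^ 2 < 1 := by nlinarith [hσ.1, hσ.2]
  set τ := √(1 - σ ^ 2) with hτ_def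
  have hτ : 0 < τ := sqrt_pos.2 (by linarith)
  have hστ : τ ^ 2 = 1 - σ ^ 2 := sq_sqrt (by linarith)
  rw [integral_eq_sub_of_hasDerivAt (fun t _ => hasDerivAt_pPrimitive hσ.1.ne' hτ hστ t)
    ((continuous_pIntegrand hσ₂).intervalIntegrable 0 1),
    pPrimitive_one_sub_pPrimitive_zero hσ.1 hτ hστ, P, ← hτ_def]
  field_simp
  ring

lemma integral_pIntegrand_pos {σ : ℝ} (hσ : σ ^ 2 < 1) :
    0 < ∫ t in (0 : ℝ)..1, pIntegrand σ t :=
  intervalIntegral_pos_of_pos_on ((continuous_pIntegrand hσ).intervalIntegrable 0 1)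
    (fun _ ht => pIntegrand_pos hσ ht) one_pos

lemma strictMonoOn_integral_pIntegrand :
    StrictMonoOn (fun σ => ∫ t in (0 : ℝ)..1, pIntegrand σ t) (Ioo 0 1) := by
  intro σ₁ hσ₁ σ₂ hσ₂ hσ₁₂
  have hsq₁₂ : σ₁ ^ 2 < σ₂ ^ 2 := by nlinarith [hσ₁.1]
  have hsq₂ : σ₂ ^ 2 < 1 := by nlinarith [hσ₂.1, hσ₂.2]
  have hint : ∀ σ : ℝ, σ ^ 2 < 1 → IntervalIntegrable (pIntegrand σ) MeasureTheory.volume 0 1 :=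
    fun _ hσ => (continuous_pIntegrand hσ).intervalIntegrable 0 1
  rw [← sub_pos, ← integral_sub (hint σ₂ hsq₂) (hint σ₁ (hsq₁₂.trans hsq₂))]
  exact intervalIntegral_pos_of_pos_on ((hint σ₂ hsq₂).sub (hint σ₁ (hsq₁₂.trans hsq₂)))
    (fun _ ht => sub_pos.2 (pIntegrand_lt_pIntegrand hsq₁₂ hsq₂ ht)) one_pos

theorem P_integral_repr :
    (∀ σ ∈ Set.Ioo (0:ℝ) 1,
        P σ = -(16 / π) * ∫ t in (0:ℝ)..1,
          (1 - t) ^ 2 * (1 + t ^ 2) * t / ((1 + t ^ 2) ^ 2 - 4 * t ^ 2 * σ ^ 2) ^ 2) ∧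
    (∀ σ ∈ Set.Ioo (0:ℝ) 1, P σ < 0) ∧
    StrictAntiOn P (Set.Ioo 0 1) := by
  have hc : -(16 / π) < 0 := neg_lt_zero.2 (by positivity)
  refine ⟨fun σ hσ => P_eq_integral_pIntegrand hσ, fun σ hσ => ?_, ?_⟩
  · rw [P_eq_integral_pIntegrand hσ]
    exact mul_neg_of_neg_of_pos hc (integral_pIntegrand_pos (by nlinarith [hσ.1, hσ.2]))
  · intro σ₁ hσ₁ σ₂ hσ₂ hσ₁₂
    rw [P_eq_integral_pIntegrand hσ₁, P_eq_integral_pIntegrand hσ₂]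
    exact mul_lt_mul_of_neg_left (strictMonoOn_integral_pIntegrand hσ₁ hσ₂ hσ₁₂) hc
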